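/- arXiv:2510.21249 — 5 statements merged into one kernel-verified Lean document; each statement's English description precedes it below -/
import Mathlib

section
/- Let E be a real inner product space, let g : E → ℝ be convex, and let ỹ ∈ E satisfy HasGradientAt g j ỹ with j ≠ 0 and g ỹ = 0. Suppose the base forecast is ŷ = ỹ + λ • j for some real λ > 0. Then for every y ∈ E with g y = 0, dist ỹ y < dist ŷ y. -/
open RealInnerProductSpace

/-!
For convex `g`, the tangent hyperplane at `ytil` supports the graph:
`g y ≥ g ytil + ⟪j, y - ytil⟫`. Hence every zero `y` of `g` satisfies `⟪j, y - ytil⟫ ≤ 0`,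
i.e. the angle at `ytil` between `y` and the direction `j` is obtuse, so moving from `ytil`
along `j` strictly increases the distance to `y`.
-/

theorem ConvexOn.apply_sub_le_sub_of_hasFDerivAt {F : Type*} [NormedAddCommGroup F]
    [NormedSpace ℝ F] {s : Set F} {g : F → ℝ} {g' : F →L[ℝ] ℝ} {x y : F}
    (hg : ConvexOn ℝ s g) (hx : x ∈ s) (hy : y ∈ s) (hd : HasFDerivAt g g' x) :
    g' (y - x) ≤ g y - g x := by
  have hline : ConvexOn ℝ (AffineMap.lineMap x y ⁻¹' s) (g ∘ AffineMap.lineMap x y) :=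
    hg.comp_affineMap _
  have hderiv : HasDerivAt (g ∘ AffineMap.lineMap (k := ℝ) x y) (g' (y - x)) 0 := by
    rw [← AffineMap.lineMap_apply_zero x y (k := ℝ)] at hd
    exact hd.comp_hasDerivAt 0 AffineMap.hasDerivAt_lineMap
  simpa [slope_def_field] using
    hline.le_slope_of_hasDerivAt (by simpa) (by simpa) zero_lt_one hderiv

theorem ConvexOn.inner_sub_le_sub_of_hasGradientAt {F : Type*} [NormedAddCommGroup F]
    [InnerProductSpace ℝ F] [CompleteSpace F] {s : Set F} {g : F → ℝ} {j x y : F}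
    (hg : ConvexOn ℝ s g) (hx : x ∈ s) (hy : y ∈ s) (hd : HasGradientAt g j x) :
    ⟪j, y - x⟫ ≤ g y - g x := by
  simpa using hg.apply_sub_le_sub_of_hasFDerivAt hx hy hd.hasFDerivAt

theorem dist_lt_dist_add_smul_of_inner_nonpos {F : Type*} [NormedAddCommGroup F]
    [InnerProductSpace ℝ F] {x y v : F} {lam : ℝ} (hv : v ≠ 0) (hlam : 0 < lam)
    (h : ⟪v, y - x⟫ ≤ 0) : dist x y < dist (x + lam • v) y := by
  have hexpand : ‖x - y + lam • v‖ ^ 2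
      = ‖x - y‖ ^ 2 + 2 * lam * -⟪v, y - x⟫ + lam ^ 2 * ‖v‖ ^ 2 := by
    rw [norm_add_sq_real, real_inner_smul_right, norm_smul, ← neg_sub y x, inner_neg_left,
      real_inner_comm, Real.norm_of_nonneg hlam.le]
    ring
  have hcross : 0 ≤ 2 * lam * -⟪v, y - x⟫ := mul_nonneg (by positivity) (neg_nonneg.mpr h)
  have hstep : 0 < lam ^ 2 * ‖v‖ ^ 2 := by positivity
  have hsq : dist x y ^ 2 < dist (x + lam • v) y ^ 2 := by
    rw [dist_eq_norm, dist_eq_norm, add_sub_right_comm, hexpand]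
    linarith
  exact lt_of_pow_lt_pow_left₀ 2 dist_nonneg hsq

/-- Core of Lemma 2: reconciliation of a base forecast `yhat = ytil + λ • j` (with
`λ > 0`, lying on the hypograph side of a single convex constraint) strictly
improves accuracy for every coherent realisation. -/
theorem reconciliation_improves_of_convex_constraint
    {E : Type*} [NormedAddCommGroup E] [InnerProductSpace ℝ E] [CompleteSpace E]
    (g : E → ℝ) (hg : ConvexOn ℝ Set.univ g)
    (ytil j : E) (hgrad : HasGradientAt g j ytil) (hj : j ≠ 0) (h0 : g ytil = 0)
    (lam : ℝ) (hlam : 0 < lam) (yhat : E) (hyhat : yhat = ytil + lam • j) :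
    ∀ y : E, g y = 0 → dist ytil y < dist yhat y := by
  intro y hy
  have hsupport : ⟪j, y - ytil⟫ ≤ 0 := by
    simpa [h0, hy] using
      hg.inner_sub_le_sub_of_hasGradientAt (Set.mem_univ ytil) (Set.mem_univ y) hgrad
  exact hyhat ▸ dist_lt_dist_add_smul_of_inner_nonpos hj hlam hsupport
end

section
/- Let E be a complete real inner product space, let g : E → ℝ be convex and continuous, and let ỹ ∈ E be such that g has a strict Fréchet derivative at ỹ whose gradient j satisfies j ≠ 0, with g ỹ = 0. Let ŷ ∈ E satisfy g ŷ > 0 (ŷ lies in the strict hypograph), and suppose ỹ globally minimises the distance to ŷ over the coherent manifold, i.e. dist ỹ ŷ ≤ dist z ŷ for every z with g z = 0. Then for every y ∈ E with g y = 0, dist ỹ y < dist ŷ y. -/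
open RealInnerProductSpace

/-- Lemma 2: for a base forecast `yhat` in the strict hypograph of a single convex
constraint, reconciliation by Euclidean projection (`ytil` is the coherent point
closest to `yhat`) strictly improves the forecast: the reconciled forecast is
strictly closer than the base forecast to every coherent point. -/
theorem projection_improves_of_convex_constraint_hypograph
    {E : Type*} [NormedAddCommGroup E] [InnerProductSpace ℝ E] [CompleteSpace E]
    (g : E → ℝ) (hg : ConvexOn ℝ Set.univ g) (hgc : Continuous g)
    (ytil j : E)
    (hgrad : HasStrictFDerivAt g (InnerProductSpace.toDual ℝ E j) ytil)
    (hj : j ≠ 0) (h0 : g ytil = 0)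
    (yhat : E) (hhyp : 0 < g yhat)
    (hmin : ∀ z : E, g z = 0 → dist ytil yhat ≤ dist z yhat) :
    ∀ y : E, g y = 0 → dist ytil y < dist yhat y := by
  -- The sublevel set C = {g ≤ 0} is convex.
  set C : Set E := {z | g z ≤ 0} with hC
  have hCconv : Convex ℝ C := by
    have := hg.convex_le 0
    simpa [Set.sep_univ] using this
  have hytilC : ytil ∈ C := by simp [hC, h0]
  -- ytil minimises the distance to yhat over all of C.
  have hminC : ∀ w ∈ C, ‖yhat - ytil‖ ≤ ‖yhat - w‖ := by
    intro w hw
    have hw' : g w ≤ 0 := hw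
    rcases hw'.eq_or_lt with hw0 | hw0
    · have := hmin w hw0
      simpa [dist_eq_norm, norm_sub_rev] using this
    · -- g w < 0 < g yhat : find a zero of g on the segment from w to yhat.
      have hcont : Continuous fun t : ℝ => g (w + t • (yhat - w)) :=
        hgc.comp (by continuity)
      have h01 : (0:ℝ) ≤ 1 := zero_le_one
      have hiv : (0:ℝ) ∈ Set.Icc (g (w + (0:ℝ) • (yhat - w))) (g (w + (1:ℝ) • (yhat - w))) := by
        constructor
        · simpa using hw0.le
        · simpa using hhyp.le
      obtain ⟨t, ht, hzt⟩ := intermediate_value_Icc h01 hcont.continuousOn hiv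
      set z := w + t • (yhat - w) with hz
      have hgz : g z = 0 := hzt
      have h1 : dist ytil yhat ≤ dist z yhat := hmin z hgz
      have h2 : yhat - z = (1 - t) • (yhat - w) := by
        rw [hz]; module
      have h3 : ‖yhat - z‖ ≤ ‖yhat - w‖ := by
        rw [h2, norm_smul, Real.norm_eq_abs, abs_of_nonneg (by linarith [ht.2])]
        nlinarith [mul_nonneg ht.1 (norm_nonneg (yhat - w))]
      calc ‖yhat - ytil‖ = dist ytil yhat := by rw [dist_eq_norm, norm_sub_rev]
        _ ≤ dist z yhat := h1
        _ = ‖yhat - z‖ := by rw [dist_eq_norm, norm_sub_rev]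
        _ ≤ ‖yhat - w‖ := h3
  -- Hence the variational inequality holds.
  have hinf : ‖yhat - ytil‖ = ⨅ w : C, ‖yhat - w‖ := by
    haveI : Nonempty C := ⟨⟨ytil, hytilC⟩⟩
    refine le_antisymm ?_ ?_
    · exact le_ciInf fun w => hminC w w.2
    · exact ciInf_le ⟨0, fun x ⟨w, hw⟩ => hw ▸ norm_nonneg _⟩ (⟨ytil, hytilC⟩ : C)
  have hvar : ∀ w ∈ C, ⟪yhat - ytil, w - ytil⟫ ≤ 0 :=
    (norm_eq_iInf_iff_real_inner_le_zero hCconv hytilC).mp hinf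
  -- Now conclude.
  intro y hy
  have hyC : y ∈ C := le_of_eq hy
  have hv : ⟪yhat - ytil, y - ytil⟫ ≤ 0 := hvar y hyC
  have hne : yhat ≠ ytil := by
    intro h; rw [h, h0] at hhyp; exact lt_irrefl 0 hhyp
  have hpos : 0 < ‖yhat - ytil‖ := by
    rw [norm_pos_iff, sub_ne_zero]; exact hne
  have hsq : ‖ytil - y‖ ^ 2 < ‖yhat - y‖ ^ 2 := by
    have hdecomp : yhat - y = (yhat - ytil) + (ytil - y) := by abel
    have hexp := norm_add_sq_real (yhat - ytil) (ytil - y)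
    have hinner : ⟪yhat - ytil, ytil - y⟫ = -⟪yhat - ytil, y - ytil⟫ := by
      rw [← inner_neg_right]; congr 1; abel
    rw [hdecomp, hexp, hinner]
    nlinarith
  have := lt_of_pow_lt_pow_left₀ 2 (norm_nonneg (yhat - y)) hsq
  simpa [dist_eq_norm] using this
end

section
/- Let E be a real inner product space, let g : E → ℝ be continuous, and let ỹ ∈ E satisfy HasGradientAt g j ỹ with j ≠ 0 and g ỹ = 0. Suppose ŷ = ỹ + λ • j for some real λ, that g ŷ > 0, and that ỹ minimises the distance to ŷ over the coherent manifold, i.e. dist ỹ ŷ ≤ dist z ŷ for every z with g z = 0. Then λ > 0. -/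
/-!
Suppose `λ ≤ 0`; then `λ < 0`, since `λ = 0` would put `ŷ = ỹ` on the manifold. Along the line
`u ↦ g (ỹ + u • j)` the derivative at `0` is `‖j‖² > 0`, so `g` is negative just before `0`, while
it is positive at `u = λ`. The intermediate value theorem gives a point of the manifold
`ỹ + u • j` with `λ < u < 0`, which is strictly closer to `ŷ = ỹ + λ • j` than `ỹ`.
-/

open Set Filter Topology RealInnerProductSpace

theorem HasDerivAt.eventually_lt_left {f : ℝ → ℝ} {f' x : ℝ} (hf : HasDerivAt f f' x)
    (hf' : 0 < f') : ∀ᶠ s in 𝓝[<] x, f s < f x := by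
  have hslope : ∀ᶠ s in 𝓝[≠] x, 0 < slope f x s :=
    (hasDerivAt_iff_tendsto_slope.mp hf).eventually (eventually_gt_nhds hf')
  filter_upwards [nhdsLT_le_nhdsNE x hslope, self_mem_nhdsWithin] with s hs hsx
  exact (slope_pos_iff_gt hsx).mp hs

theorem exists_mem_Ioo_eq_of_hasDerivAt_pos {f : ℝ → ℝ} {f' a x : ℝ} (hax : a < x)
    (hc : ContinuousOn f (Icc a x)) (hf : HasDerivAt f f' x) (hf' : 0 < f') (hfa : f x < f a) :
    ∃ u ∈ Ioo a x, f u = f x := by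
  obtain ⟨s, hfs, has, hsx⟩ :=
    ((hf.eventually_lt_left hf').and (Ioo_mem_nhdsLT hax)).exists
  obtain ⟨u, hu, hfu⟩ :=
    intermediate_value_Ioo' has.le (hc.mono (Icc_subset_Icc_right hsx.le)) ⟨hfs, hfa⟩
  exact ⟨u, ⟨hu.1, hu.2.trans hsx⟩, hfu⟩

theorem HasGradientAt.hasDerivAt_comp_add_smul {E : Type*} [NormedAddCommGroup E]
    [InnerProductSpace ℝ E] [CompleteSpace E] {g : E → ℝ} {j x : E} (hg : HasGradientAt g j x)
    (v : E) : HasDerivAt (fun u : ℝ => g (x + u • v)) ⟪j, v⟫ 0 := by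
  have hline : HasDerivAt (fun u : ℝ => x + u • v) v 0 :=
    ((hasDerivAt_id 0).smul_const v).const_add x |>.congr_deriv (one_smul ℝ v)
  have hg' : HasFDerivAt g (InnerProductSpace.toDual ℝ E j) (x + (0 : ℝ) • v) := by
    simpa using hg.hasFDerivAt
  have hcomp := hg'.comp_hasDerivAt 0 hline
  rwa [InnerProductSpace.toDual_apply_apply] at hcomp

theorem dist_add_smul_add_smul {E : Type*} [SeminormedAddCommGroup E] [NormedSpace ℝ E]
    (x v : E) (s t : ℝ) : dist (x + s • v) (x + t • v) = |s - t| * ‖v‖ := by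
  rw [dist_add_left, dist_eq_norm, ← sub_smul, norm_smul, Real.norm_eq_abs]

/-- For a base forecast `yhat = ytil + λ • j` in the strict hypograph of the
constraint, where `ytil` is the projection of `yhat` onto the coherent manifold,
the Lagrange multiplier `λ` is positive. -/
theorem lagrange_multiplier_pos_of_hypograph
    {E : Type*} [NormedAddCommGroup E] [InnerProductSpace ℝ E] [CompleteSpace E]
    (g : E → ℝ) (hgc : Continuous g)
    (ytil j : E) (hgrad : HasGradientAt g j ytil) (hj : j ≠ 0) (h0 : g ytil = 0)
    (lam : ℝ) (yhat : E) (hyhat : yhat = ytil + lam • j)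
    (hhyp : 0 < g yhat)
    (hmin : ∀ z : E, g z = 0 → dist ytil yhat ≤ dist z yhat) :
    0 < lam := by
  subst hyhat
  by_contra! hlam
  have hlam_neg : lam < 0 := hlam.lt_of_ne (by rintro rfl; simp [h0] at hhyp)
  obtain ⟨u, ⟨hlam_u, hu_neg⟩, hgu⟩ := exists_mem_Ioo_eq_of_hasDerivAt_pos hlam_neg
    (hgc.comp (by fun_prop)).continuousOn (hgrad.hasDerivAt_comp_add_smul j)
    (real_inner_self_pos.mpr hj) (by simpa [h0] using hhyp)
  have hcloser := hmin (ytil + u • j) (by simpa [h0] using hgu)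
  have hdist_ytil := dist_add_smul_add_smul ytil j 0 lam
  rw [zero_smul, add_zero] at hdist_ytil
  rw [hdist_ytil, dist_add_smul_add_smul, abs_of_pos (by linarith),
    abs_of_pos (by linarith)] at hcloser
  linarith [le_of_mul_le_mul_right hcloser (norm_pos_iff.mpr hj)]
end

section
/- Let E be a real inner product space, let g : E → ℝ be continuous, and let ỹ ∈ E satisfy HasGradientAt g j ỹ with j ≠ 0 and g ỹ = 0. Suppose ŷ = ỹ + λ • j for some real λ, that g ŷ < 0, and that ỹ minimises the distance to ŷ over the coherent manifold, i.e. dist ỹ ŷ ≤ dist z ŷ for every z with g z = 0. Then λ < 0. -/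
open RealInnerProductSpace

/-!
Minimality of `ỹ` keeps `g ≤ 0` on the segment `[ỹ, ŷ]`: a positive value there, together with
`g ŷ < 0`, would give by the intermediate value theorem a zero of `g` on the segment strictly
closer to `ŷ` than `ỹ`. So `ỹ` maximises `g` on the segment, and Fermat's rule in the direction
`ŷ - ỹ = λ • j` gives `λ ‖j‖² ≤ 0`, while `λ ≠ 0` because `g ŷ ≠ g ỹ`.
-/

theorem nonpos_on_segment_of_nearest_zero {E : Type*} [NormedAddCommGroup E] [NormedSpace ℝ E]
    {g : E → ℝ} (hg : Continuous g) {x y : E}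
    (hx : g x = 0) (hy : g y < 0) (hmin : ∀ z : E, g z = 0 → dist x y ≤ dist z y) :
    ∀ z ∈ segment ℝ x y, g z ≤ 0 := by
  rw [segment_eq_image_lineMap]
  rintro _ ⟨t, ⟨ht0, ht1⟩, rfl⟩
  by_contra! hpos
  have ht : 0 < t := ht0.lt_of_ne <| by
    rintro rfl
    simp [hx] at hpos
  have hxy : 0 < dist x y := dist_pos.2 fun h => by simp [h] at hx; linarith
  obtain ⟨s, ⟨hts, hs1⟩, hs⟩ :=
    intermediate_value_Icc' ht1 (hg.comp AffineMap.lineMap_continuous).continuousOn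
      ⟨by simpa using hy.le, hpos.le⟩
  have hcloser := hmin _ hs
  rw [dist_lineMap_right, Real.norm_eq_abs, abs_of_nonneg (by linarith)] at hcloser
  nlinarith

theorem HasGradientAt.inner_nonpos_of_isMaxOn_segment {E : Type*} [NormedAddCommGroup E]
    [InnerProductSpace ℝ E] [CompleteSpace E] {g : E → ℝ} {x j v : E} (hg : HasGradientAt g j x)
    (hmax : IsMaxOn g (segment ℝ x (x + v)) x) : ⟪j, v⟫ ≤ 0 := by
  simpa using hmax.localize.hasFDerivWithinAt_nonpos hg.hasFDerivAt.hasFDerivWithinAt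
    (mem_posTangentConeAt_of_segment_subset subset_rfl)

/-- For a base forecast `yhat = ytil + λ • j` in the strict epigraph of the
constraint, where `ytil` is the projection of `yhat` onto the coherent manifold,
the Lagrange multiplier `λ` is negative. -/
theorem lagrange_multiplier_neg_of_epigraph
    {E : Type*} [NormedAddCommGroup E] [InnerProductSpace ℝ E] [CompleteSpace E]
    (g : E → ℝ) (hgc : Continuous g)
    (ytil j : E) (hgrad : HasGradientAt g j ytil) (hj : j ≠ 0) (h0 : g ytil = 0)
    (lam : ℝ) (yhat : E) (hyhat : yhat = ytil + lam • j)
    (hepi : g yhat < 0)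
    (hmin : ∀ z : E, g z = 0 → dist ytil yhat ≤ dist z yhat) :
    lam < 0 := by
  have hseg := nonpos_on_segment_of_nearest_zero hgc h0 hepi hmin
  subst hyhat
  have hinner : ⟪j, lam • j⟫ ≤ 0 :=
    hgrad.inner_nonpos_of_isMaxOn_segment fun z hz => h0 ▸ hseg z hz
  rw [real_inner_smul_right, real_inner_self_eq_norm_sq] at hinner
  have hlam : lam ≠ 0 := by
    rintro rfl
    simp [h0] at hepi
  have hj2 : 0 < ‖j‖ ^ 2 := pow_pos (norm_pos_iff.2 hj) 2
  exact lt_of_le_of_ne (nonpos_of_mul_nonpos_left hinner hj2) hlam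
end

section
/- Let E be a real inner product space, let C be a natural number, and for each c ∈ Fin C let g c : E → ℝ be a convex function with HasGradientAt (g c) (j c) ỹ and g c ỹ = 0. Let λ : Fin C → ℝ satisfy λ c ≥ 0 for all c, and suppose the base forecast is ŷ = ỹ + ∑ c, λ c • j c with ŷ ≠ ỹ. Then for every y ∈ E satisfying g c y = 0 for all c ∈ Fin C, dist ỹ y < dist ŷ y. -/
/-!
Each constraint `g c` is convex, so it lies above its tangent plane at `ỹ`; since `g c` vanishes
at both `ỹ` and a coherent `y`, this gives `⟪j c, ỹ - y⟫ ≥ 0`. With nonnegative multipliers the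
correction `d = ŷ - ỹ = ∑ c, λ c • j c` then makes a nonobtuse angle with `ỹ - y`, and
`‖ŷ - y‖² = ‖ỹ - y‖² + 2 ⟪d, ỹ - y⟫ + ‖d‖² > ‖ỹ - y‖²` because `d ≠ 0`.
-/

open RealInnerProductSpace

section FirstOrderCondition

variable {E : Type*} [NormedAddCommGroup E]

theorem ConvexOn.add_fderiv_sub_le [NormedSpace ℝ E] {s : Set E} {f : E → ℝ} {f' : E →L[ℝ] ℝ}
    {x y : E} (hf : ConvexOn ℝ s f) (hx : x ∈ s) (hy : y ∈ s) (hf' : HasFDerivAt f f' x) :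
    f x + f' (y - x) ≤ f y := by
  let ℓ : ℝ →ᵃ[ℝ] E := AffineMap.lineMap x y
  have hline : ConvexOn ℝ (ℓ ⁻¹' s) (f ∘ ℓ) := hf.comp_affineMap ℓ
  have hderiv : HasDerivAt (f ∘ ℓ) (f' (y - x)) 0 := by
    have hℓ0 : ℓ 0 = x := AffineMap.lineMap_apply_zero x y
    rw [← hℓ0] at hf'
    exact hf'.comp_hasDerivAt (0 : ℝ) AffineMap.hasDerivAt_lineMap
  have hslope := hline.le_slope_of_hasDerivAt (by simpa [ℓ] using hx) (by simpa [ℓ] using hy)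
    one_pos hderiv
  simp only [slope_def_field, Function.comp_apply, ℓ, AffineMap.lineMap_apply_zero,
    AffineMap.lineMap_apply_one, sub_zero, div_one] at hslope
  linarith

theorem ConvexOn.add_inner_gradient_sub_le [InnerProductSpace ℝ E] [CompleteSpace E]
    {s : Set E} {f : E → ℝ} {j x y : E} (hf : ConvexOn ℝ s f) (hx : x ∈ s) (hy : y ∈ s)
    (hj : HasGradientAt f j x) :
    f x + ⟪j, y - x⟫ ≤ f y :=
  hf.add_fderiv_sub_le hx hy hj.hasFDerivAt

end FirstOrderCondition

theorem norm_lt_norm_add_of_inner_nonneg {E : Type*} [NormedAddCommGroup E]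
    [InnerProductSpace ℝ E] {a d : E} (had : 0 ≤ ⟪d, a⟫) (hd : d ≠ 0) :
    ‖a‖ < ‖a + d‖ := by
  have hsq : ‖a‖ ^ 2 < ‖a + d‖ ^ 2 := by
    rw [norm_add_sq_real, real_inner_comm]
    have := norm_pos_iff.mpr hd
    nlinarith
  exact lt_of_pow_lt_pow_left₀ 2 (norm_nonneg _) hsq

/-- Theorem 2: with multiple convex constraints and a base forecast
`yhat = ytil + ∑ c, λ c • j c` with nonnegative Lagrange multipliers (i.e. lying in
the intersection of the strict hypographs), reconciliation strictly improves
forecast accuracy for every coherent realisation. -/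
theorem reconciliation_improves_multiple_convex_constraints
    {E : Type*} [NormedAddCommGroup E] [InnerProductSpace ℝ E] [CompleteSpace E]
    (C : ℕ) (g : Fin C → E → ℝ) (hg : ∀ c, ConvexOn ℝ Set.univ (g c))
    (ytil : E) (j : Fin C → E)
    (hgrad : ∀ c, HasGradientAt (g c) (j c) ytil) (h0 : ∀ c, g c ytil = 0)
    (lam : Fin C → ℝ) (hlam : ∀ c, 0 ≤ lam c)
    (yhat : E) (hyhat : yhat = ytil + ∑ c, lam c • j c) (hne : yhat ≠ ytil) :
    ∀ y : E, (∀ c, g c y = 0) → dist ytil y < dist yhat y := by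
  intro y hy
  have hgrad_nonneg (c : Fin C) : 0 ≤ ⟪j c, ytil - y⟫ := by
    have := (hg c).add_inner_gradient_sub_le (Set.mem_univ _) (Set.mem_univ y) (hgrad c)
    rw [h0 c, hy c, inner_sub_right] at this
    rw [inner_sub_right]
    linarith
  have hcorr_nonneg : 0 ≤ ⟪∑ c, lam c • j c, ytil - y⟫ := by
    rw [sum_inner]
    exact Finset.sum_nonneg fun c _ => by
      rw [real_inner_smul_left]; exact mul_nonneg (hlam c) (hgrad_nonneg c)
  have hcorr_ne : ∑ c, lam c • j c ≠ 0 := fun h => hne (by rw [hyhat, h, add_zero])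
  have hyhat_sub : yhat - y = (ytil - y) + ∑ c, lam c • j c := by rw [hyhat]; abel
  rw [dist_eq_norm, dist_eq_norm, hyhat_sub]
  exact norm_lt_norm_add_of_inner_nonneg hcorr_nonneg hcorr_ne
end
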